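/- arXiv:1005.2774 — 5 statements merged into one kernel-verified Lean document; each statement's English description precedes it below -/
import Mathlib

section
/- Let W be a positive integer-valued random variable with E W = 1/p for some 0 < p ≤ 1, let W^e be a random variable defined on the same probability space having the discrete equilibrium distribution with respect to W, and set D = W − W^e. Then dTV(L(W^e), Ge(p)) ≤ p · E|D|. -/
open MeasureTheory ProbabilityTheory Real

/-- `Ge(p){B}`: probability that a geometric random variable on `{1,2,...}`
with parameter `p` (mass `(1-p)^{k-1} p` at `k`) lies in `B ⊆ ℤ`. -/
noncomputable def geProb (p : ℝ) (B : Set ℤ) : ℝ :=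
  ∑' k : ℕ, B.indicator (fun _ => (1 - p) ^ k * p) ((k : ℤ) + 1)

/-- Total variation distance between the law of an integer-valued random
variable `W` (under `μ`) and the geometric distribution `Ge(p)` on `{1,2,...}`. -/
noncomputable def dTVGe {Ω : Type*} [MeasurableSpace Ω] (μ : Measure Ω)
    (W : Ω → ℤ) (p : ℝ) : ℝ :=
  ⨆ B : Set ℤ, |(μ {ω | W ω ∈ B}).toReal - geProb p B|

open scoped ENNReal

/-!
Stein's method for the geometric law. For `0 ≤ g ≤ 1` put `S k = ∑ₙ (1 - p)ⁿ g (n + k)`, so that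
`g k = S k - (1 - p) S (k + 1)`, `Ge(p)[g] = p S 1` and `0 ≤ p S ≤ 1`; the last bound makes `S`
1-Lipschitz. Since `P(Wᵉ = k) = p P(W ≥ k)`, summation by parts gives
`E[S (Wᵉ + 1) - S Wᵉ] = p E[S (W + 1) - S 1]`, and substituting,
`E g(Wᵉ) - Ge(p)[g] = p E[S (Wᵉ + 1) - S (W + 1)]`, which is at most `p E|W - Wᵉ|` in absolute
value.
-/

section GeomSmooth

variable {p : ℝ} {g : ℤ → ℝ}

noncomputable def geomSmooth (p : ℝ) (g : ℤ → ℝ) (k : ℤ) : ℝ :=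
  ∑' n : ℕ, (1 - p) ^ n * g (n + k)

lemma summable_geomSmooth (hp0 : 0 < p) (hp1 : p ≤ 1) (hg0 : ∀ k, 0 ≤ g k)
    (hg1 : ∀ k, g k ≤ 1) (k : ℤ) : Summable fun n : ℕ => (1 - p) ^ n * g (n + k) :=
  (summable_geometric_of_lt_one (by linarith) (by linarith)).of_nonneg_of_le
    (fun n => mul_nonneg (pow_nonneg (by linarith) n) (hg0 _))
    (fun n => mul_le_of_le_one_right (pow_nonneg (by linarith) n) (hg1 _))

lemma geomSmooth_eq (hp0 : 0 < p) (hp1 : p ≤ 1) (hg0 : ∀ k, 0 ≤ g k) (hg1 : ∀ k, g k ≤ 1)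
    (k : ℤ) : geomSmooth p g k = g k + (1 - p) * geomSmooth p g (k + 1) := by
  rw [geomSmooth, (summable_geomSmooth hp0 hp1 hg0 hg1 k).tsum_eq_zero_add, geomSmooth,
    ← tsum_mul_left]
  congr 1
  · simp
  · refine tsum_congr fun n => ?_
    push_cast
    ring_nf

lemma geomSmooth_nonneg (hp1 : p ≤ 1) (hg0 : ∀ k, 0 ≤ g k) (k : ℤ) : 0 ≤ geomSmooth p g k :=
  tsum_nonneg fun n => mul_nonneg (pow_nonneg (by linarith) n) (hg0 _)

lemma mul_geomSmooth_le_one (hp0 : 0 < p) (hp1 : p ≤ 1) (hg0 : ∀ k, 0 ≤ g k)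
    (hg1 : ∀ k, g k ≤ 1) (k : ℤ) : p * geomSmooth p g k ≤ 1 := by
  have hgeom := summable_geometric_of_lt_one (r := 1 - p) (by linarith) (by linarith)
  calc p * geomSmooth p g k ≤ p * ∑' n : ℕ, (1 - p) ^ n := by
        gcongr
        exact (summable_geomSmooth hp0 hp1 hg0 hg1 k).tsum_le_tsum
          (fun n => mul_le_of_le_one_right (pow_nonneg (by linarith) n) (hg1 _)) hgeom
    _ = 1 := by
        rw [tsum_geometric_of_lt_one (by linarith) (by linarith), sub_sub_cancel]
        exact mul_inv_cancel₀ hp0.ne'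

lemma abs_geomSmooth_add_one_sub_le (hp0 : 0 < p) (hp1 : p ≤ 1) (hg0 : ∀ k, 0 ≤ g k)
    (hg1 : ∀ k, g k ≤ 1) (k : ℤ) : |geomSmooth p g (k + 1) - geomSmooth p g k| ≤ 1 := by
  have hrec := geomSmooth_eq hp0 hp1 hg0 hg1 k
  have hle := mul_geomSmooth_le_one hp0 hp1 hg0 hg1 (k + 1)
  have hnn := mul_nonneg hp0.le (geomSmooth_nonneg hp1 hg0 (k + 1))
  have := hg0 k
  have := hg1 k
  rw [abs_le]
  constructor <;> linarith

lemma abs_sub_le_of_abs_add_one_sub_le {f : ℤ → ℝ} (hf : ∀ k, |f (k + 1) - f k| ≤ 1)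
    (a b : ℤ) : |f a - f b| ≤ |(a : ℝ) - b| := by
  wlog hba : b ≤ a generalizing a b
  · rw [abs_sub_comm, abs_sub_comm (a : ℝ)]
    exact this b a (le_of_not_ge hba)
  rw [abs_of_nonneg (a := (a : ℝ) - b) (by simpa using hba)]
  induction a, hba using Int.leInduction with
  | base => simp
  | succ n _ ih =>
    calc |f (n + 1) - f b| ≤ |f (n + 1) - f n| + |f n - f b| := abs_sub_le _ _ _
      _ ≤ 1 + (n - b) := add_le_add (hf n) ih
      _ = ((n + 1 : ℤ) : ℝ) - b := by push_cast; ring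

lemma geProb_eq_mul_geomSmooth (p : ℝ) (B : Set ℤ) :
    geProb p B = p * geomSmooth p (B.indicator 1) 1 := by
  rw [geProb, geomSmooth, ← tsum_mul_left]
  refine tsum_congr fun n => ?_
  by_cases h : (n : ℤ) + 1 ∈ B <;> simp [h, mul_comm]

end GeomSmooth

lemma tsum_ite_add_one_le {M : Type*} [AddCommMonoid M] [TopologicalSpace M] (a : ℕ → M)
    (n : ℤ) : ∑' k : ℕ, (if (k : ℤ) + 1 ≤ n then a k else 0) = ∑ k ∈ Finset.range n.toNat, a k := by
  rw [tsum_eq_sum (s := Finset.range n.toNat)]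
  · exact Finset.sum_congr rfl fun k hk => if_pos (by simp only [Finset.mem_range] at hk; omega)
  · intro k hk
    simp only [Finset.mem_range, not_lt] at hk
    exact if_neg (by omega)

section DiscreteIntegrals

variable {Ω : Type*} [MeasurableSpace Ω] {μ : Measure Ω}

lemma measurableSet_eq_add_one {X : Ω → ℤ} (hX : Measurable X) (k : ℕ) :
    MeasurableSet {ω | X ω = k + 1} :=
  hX (measurableSet_singleton _)

lemma measurableSet_add_one_le {X : Ω → ℤ} (hX : Measurable X) (k : ℕ) :
    MeasurableSet {ω | (k : ℤ) + 1 ≤ X ω} :=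
  hX measurableSet_Ici

lemma tsum_measure_add_one_le {X : Ω → ℤ} (hX : Measurable X) (hX0 : ∀ ω, 0 ≤ X ω) :
    ∑' k : ℕ, μ {ω | (k : ℤ) + 1 ≤ X ω} = ∫⁻ ω, ENNReal.ofReal (X ω) ∂μ := by
  calc ∑' k : ℕ, μ {ω | (k : ℤ) + 1 ≤ X ω}
      = ∑' k : ℕ, ∫⁻ ω, {ω | (k : ℤ) + 1 ≤ X ω}.indicator 1 ω ∂μ := by
        simp_rw [lintegral_indicator_one (measurableSet_add_one_le hX _)]
    _ = ∫⁻ ω, ∑' k : ℕ, {ω | (k : ℤ) + 1 ≤ X ω}.indicator 1 ω ∂μ :=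
        (lintegral_tsum fun k =>
          (measurable_one.indicator (measurableSet_add_one_le hX k)).aemeasurable).symm
    _ = ∫⁻ ω, ENNReal.ofReal (X ω) ∂μ := lintegral_congr fun ω => by
        simp only [Set.indicator_apply, Set.mem_ofPred_eq, Pi.one_apply, tsum_ite_add_one_le,
          Finset.sum_const, Finset.card_range, nsmul_eq_mul, mul_one]
        rw [← ENNReal.ofReal_natCast, ← Int.cast_natCast, Int.toNat_of_nonneg (hX0 ω)]

lemma integral_tsum_indicator_const {S : ℕ → Set Ω} (hS : ∀ k, MeasurableSet (S k))
    (hμS : ∑' k, μ (S k) ≠ ∞) {v : ℕ → ℝ} {C : ℝ} (hv : ∀ k, |v k| ≤ C) :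
    ∫ ω, ∑' k, (S k).indicator (fun _ => v k) ω ∂μ = ∑' k, μ.real (S k) * v k := by
  rw [integral_tsum (fun k => (measurable_const.indicator (hS k)).aestronglyMeasurable)]
  · simp_rw [integral_indicator_const _ (hS _), smul_eq_mul]
  · simp_rw [enorm_indicator_eq_indicator_enorm, lintegral_indicator_const (hS _)]
    refine ne_top_of_le_ne_top (ENNReal.mul_ne_top (ENNReal.ofReal_ne_top (r := C)) hμS) ?_
    rw [← ENNReal.tsum_mul_left]
    refine ENNReal.tsum_le_tsum fun k => mul_le_mul_left ?_ _
    rw [Real.enorm_eq_ofReal_abs]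
    exact ENNReal.ofReal_le_ofReal (hv k)

lemma integrable_comp_of_abs_le [IsFiniteMeasure μ] {X : Ω → ℤ} (hX : Measurable X) {v : ℤ → ℝ}
    {C : ℝ} (hv : ∀ k, |v k| ≤ C) : Integrable (fun ω => v (X ω)) μ :=
  .of_bound (Measurable.of_discrete.comp hX).aestronglyMeasurable C
    (Filter.Eventually.of_forall fun _ => hv _)

lemma measure_one_le_eq_tsum {X : Ω → ℤ} (hX : Measurable X) :
    μ {ω | 1 ≤ X ω} = ∑' k : ℕ, μ {ω | X ω = k + 1} := by
  have hunion : {ω | 1 ≤ X ω} = ⋃ k : ℕ, {ω | X ω = k + 1} := by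
    ext ω
    simp only [Set.mem_ofPred_eq, Set.mem_iUnion]
    exact ⟨fun h => ⟨(X ω - 1).toNat, by omega⟩, fun ⟨k, hk⟩ => by omega⟩
  rw [hunion, measure_iUnion _ (measurableSet_eq_add_one hX)]
  intro i j hij
  exact Set.disjoint_left.mpr fun ω hi hj => hij (by simp only [Set.mem_ofPred_eq] at hi hj; omega)

lemma integral_comp_eq_tsum_of_one_le [IsFiniteMeasure μ] {X : Ω → ℤ} (hX : Measurable X)
    (hX1 : ∀ᵐ ω ∂μ, 1 ≤ X ω) {v : ℤ → ℝ} {C : ℝ} (hv : ∀ k, |v k| ≤ C) :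
    ∫ ω, v (X ω) ∂μ = ∑' k : ℕ, μ.real {ω | X ω = k + 1} * v (k + 1) := by
  rw [← integral_tsum_indicator_const (measurableSet_eq_add_one hX)
    (by rw [← measure_one_le_eq_tsum hX]; exact measure_ne_top _ _) (fun k => hv _)]
  refine integral_congr_ae (hX1.mono fun ω hω => ?_)
  dsimp only
  rw [tsum_eq_single (X ω - 1).toNat fun k hk => Set.indicator_of_notMem (by simp only [Set.mem_ofPred_eq]; omega) _,
    Set.indicator_of_mem (by simp only [Set.mem_ofPred_eq]; omega)]
  congr 1
  omega

lemma integral_comp_add_one_sub_eq_tsum {X : Ω → ℤ} (hX : Measurable X) (hX0 : ∀ ω, 0 ≤ X ω)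
    (hfin : ∑' k : ℕ, μ {ω | (k : ℤ) + 1 ≤ X ω} ≠ ∞) {h : ℤ → ℝ} {C : ℝ}
    (hh : ∀ k, |h (k + 1) - h k| ≤ C) :
    ∫ ω, (h (X ω + 1) - h 1) ∂μ
      = ∑' k : ℕ, μ.real {ω | (k : ℤ) + 1 ≤ X ω} * (h (k + 1 + 1) - h (k + 1)) := by
  rw [← integral_tsum_indicator_const (measurableSet_add_one_le hX) hfin (fun k => hh _)]
  refine integral_congr_ae (Filter.Eventually.of_forall fun ω => ?_)
  have htele := Finset.sum_range_sub (fun k : ℕ => h (k + 1)) (X ω).toNat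
  push_cast at htele
  simp only [Set.indicator_apply, Set.mem_ofPred_eq, tsum_ite_add_one_le, htele,
    Int.toNat_of_nonneg (hX0 ω)]

end DiscreteIntegrals

section Equilibrium

variable {Ω : Type*} [MeasurableSpace Ω] {μ : Measure Ω}

def IsDiscreteEquilibrium (μ : Measure Ω) (W We : Ω → ℤ) : Prop :=
  ∀ k : ℤ, 1 ≤ k → μ.real {ω | We ω = k} = μ.real {ω | k ≤ W ω} / ∫ ω, (W ω : ℝ) ∂μ

variable [IsProbabilityMeasure μ] {W We : Ω → ℤ} {p : ℝ}

lemma ae_one_le_of_tsum_measure_eq_one {X : Ω → ℤ} (hX : Measurable X)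
    (h : ∑' k : ℕ, μ {ω | X ω = k + 1} = 1) : ∀ᵐ ω ∂μ, 1 ≤ X ω := by
  refine (ae_iff_measure_eq (p := fun ω => 1 ≤ X ω) (hX measurableSet_Ici).nullMeasurableSet).mpr ?_
  rw [measure_one_le_eq_tsum hX, h, measure_univ]

theorem integral_sub_eq_of_equilibrium (hW : Measurable W) (hWe : Measurable We)
    (hW0 : ∀ ω, 0 ≤ W ω) (hp0 : 0 < p) (hmean : ∫ ω, (W ω : ℝ) ∂μ = 1 / p)
    (heq : IsDiscreteEquilibrium μ W We)
    {h : ℤ → ℝ} {C : ℝ} (hh : ∀ k, |h (k + 1) - h k| ≤ C) :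
    ∫ ω, (h (We ω + 1) - h (We ω)) ∂μ = p * ∫ ω, (h (W ω + 1) - h 1) ∂μ := by
  have hWint : Integrable (fun ω => (W ω : ℝ)) μ := by
    by_contra hW'
    rw [integral_undef hW'] at hmean
    have : 0 < 1 / p := by positivity
    linarith
  have hlayer : ∑' k : ℕ, μ {ω | (k : ℤ) + 1 ≤ W ω} = ENNReal.ofReal (1 / p) := by
    rw [tsum_measure_add_one_le hW hW0, ← hmean, ofReal_integral_eq_lintegral_ofReal hWint
      (Filter.Eventually.of_forall fun ω => Int.cast_nonneg (hW0 ω))]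
  have hlaw (k : ℕ) : μ.real {ω | We ω = k + 1} = p * μ.real {ω | (k : ℤ) + 1 ≤ W ω} := by
    rw [heq _ (by omega), hmean]
    field_simp
  have hWe1 : ∀ᵐ ω ∂μ, 1 ≤ We ω := by
    refine ae_one_le_of_tsum_measure_eq_one hWe ?_
    have hlaw' (k : ℕ) : μ {ω | We ω = k + 1} = ENNReal.ofReal p * μ {ω | (k : ℤ) + 1 ≤ W ω} := by
      rw [← ofReal_measureReal, hlaw, ENNReal.ofReal_mul hp0.le, ofReal_measureReal]
    rw [tsum_congr hlaw', ENNReal.tsum_mul_left, hlayer, ← ENNReal.ofReal_mul hp0.le,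
      mul_one_div_cancel hp0.ne', ENNReal.ofReal_one]
  rw [integral_comp_eq_tsum_of_one_le hWe hWe1 (v := fun k => h (k + 1) - h k) hh,
    integral_comp_add_one_sub_eq_tsum hW hW0 (hlayer ▸ ENNReal.ofReal_ne_top) hh, ← tsum_mul_left]
  exact tsum_congr fun k => by rw [hlaw]; ring

lemma abs_integral_sub_mul_geomSmooth_le (hW : Measurable W) (hWe : Measurable We)
    (hW0 : ∀ ω, 0 ≤ W ω) (hp0 : 0 < p) (hp1 : p ≤ 1) (hmean : ∫ ω, (W ω : ℝ) ∂μ = 1 / p)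
    (heq : IsDiscreteEquilibrium μ W We)
    (hD : Integrable (fun ω => |(W ω : ℝ) - We ω|) μ) {g : ℤ → ℝ} (hg0 : ∀ k, 0 ≤ g k)
    (hg1 : ∀ k, g k ≤ 1) :
    |∫ ω, g (We ω) ∂μ - p * geomSmooth p g 1| ≤ p * ∫ ω, |(W ω : ℝ) - We ω| ∂μ := by
  have hS (k : ℤ) : |geomSmooth p g k| ≤ 1 / p := by
    rw [abs_of_nonneg (geomSmooth_nonneg hp1 hg0 k), le_div_iff₀ hp0, mul_comm]
    exact mul_geomSmooth_le_one hp0 hp1 hg0 hg1 k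
  have hSWe := integrable_comp_of_abs_le (μ := μ) hWe hS
  have hSWe1 := integrable_comp_of_abs_le (μ := μ) hWe (v := fun k => geomSmooth p g (k + 1))
    fun k => hS _
  have hSW1 := integrable_comp_of_abs_le (μ := μ) hW (v := fun k => geomSmooth p g (k + 1))
    fun k => hS _
  have hstein : ∫ ω, g (We ω) ∂μ
      = ∫ ω, geomSmooth p g (We ω) ∂μ - (1 - p) * ∫ ω, geomSmooth p g (We ω + 1) ∂μ := by
    rw [← integral_const_mul, ← integral_sub hSWe (hSWe1.const_mul _)]
    refine integral_congr_ae (Filter.Eventually.of_forall fun ω => ?_)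
    dsimp only
    rw [geomSmooth_eq hp0 hp1 hg0 hg1 (We ω)]
    ring
  have hequil := integral_sub_eq_of_equilibrium hW hWe hW0 hp0 hmean heq
    (abs_geomSmooth_add_one_sub_le hp0 hp1 hg0 hg1)
  rw [integral_sub hSWe1 hSWe, integral_sub hSW1 (integrable_const _), integral_const,
    probReal_univ, one_smul] at hequil
  have hdiff : ∫ ω, g (We ω) ∂μ - p * geomSmooth p g 1
      = p * ∫ ω, (geomSmooth p g (We ω + 1) - geomSmooth p g (W ω + 1)) ∂μ := by
    rw [integral_sub hSWe1 hSW1]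
    linear_combination hstein - hequil
  have hlip := abs_sub_le_of_abs_add_one_sub_le (abs_geomSmooth_add_one_sub_le hp0 hp1 hg0 hg1)
  rw [hdiff, abs_mul, abs_of_pos hp0]
  gcongr
  calc |∫ ω, (geomSmooth p g (We ω + 1) - geomSmooth p g (W ω + 1)) ∂μ|
      ≤ ∫ ω, |geomSmooth p g (We ω + 1) - geomSmooth p g (W ω + 1)| ∂μ :=
        abs_integral_le_integral_abs
    _ ≤ ∫ ω, |(W ω : ℝ) - We ω| ∂μ := by
        refine integral_mono (hSWe1.sub hSW1).abs hD fun ω => (hlip _ _).trans_eq ?_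
        push_cast
        rw [abs_sub_comm]
        ring_nf

lemma abs_measureReal_sub_geProb_le (hW : Measurable W) (hWe : Measurable We)
    (hW0 : ∀ ω, 0 ≤ W ω) (hp0 : 0 < p) (hp1 : p ≤ 1) (hmean : ∫ ω, (W ω : ℝ) ∂μ = 1 / p)
    (heq : ∀ k : ℤ, 1 ≤ k →
      (μ {ω | We ω = k}).toReal = (μ {ω | k ≤ W ω}).toReal / ∫ ω, (W ω : ℝ) ∂μ)
    (hD : Integrable (fun ω => |(W ω : ℝ) - We ω|) μ) (B : Set ℤ) :
    |μ.real {ω | We ω ∈ B} - geProb p B| ≤ p * ∫ ω, |(W ω : ℝ) - We ω| ∂μ := by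
  have hB := abs_integral_sub_mul_geomSmooth_le hW hWe hW0 hp0 hp1 hmean heq hD (g := B.indicator 1)
    (Set.indicator_nonneg fun _ _ => zero_le_one) (Set.indicator_le_self' fun _ _ => zero_le_one)
  have hprob : μ.real {ω | We ω ∈ B} = ∫ ω, B.indicator 1 (We ω) ∂μ :=
    (integral_indicator_one (hWe MeasurableSet.of_discrete)).symm
  rwa [hprob, geProb_eq_mul_geomSmooth]

end Equilibrium

theorem geometric_approx_tv_equilibrium_positive
    {Ω : Type*} [MeasurableSpace Ω] (μ : Measure Ω) [IsProbabilityMeasure μ]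
    (W We : Ω → ℤ) (hW : Measurable W) (hWe : Measurable We)
    (p : ℝ) (hp0 : 0 < p) (hp1 : p ≤ 1)
    (hWpos : ∀ ω, 0 < W ω)
    (hmean : ∫ ω, (W ω : ℝ) ∂μ = 1 / p)
    (heq : ∀ k : ℤ, 1 ≤ k →
      (μ {ω | We ω = k}).toReal = (μ {ω | k ≤ W ω}).toReal / ∫ ω, (W ω : ℝ) ∂μ) :
    ENNReal.ofReal (dTVGe μ We p)
      ≤ ENNReal.ofReal p * ∫⁻ ω, ENNReal.ofReal |(W ω : ℝ) - We ω| ∂μ := by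
  by_cases hfin : ∫⁻ ω, ENNReal.ofReal |(W ω : ℝ) - We ω| ∂μ = ∞
  · rw [hfin, ENNReal.mul_top (ENNReal.ofReal_pos.mpr hp0).ne']
    exact le_top
  have hDnn : 0 ≤ᵐ[μ] fun ω => |(W ω : ℝ) - We ω| :=
    Filter.Eventually.of_forall fun _ => abs_nonneg _
  have hD : Integrable (fun ω => |(W ω : ℝ) - We ω|) μ :=
    (lintegral_ofReal_ne_top_iff_integrable (by fun_prop) hDnn).mp hfin
  have hdTV : dTVGe μ We p ≤ p * ∫ ω, |(W ω : ℝ) - We ω| ∂μ :=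
    Real.iSup_le (abs_measureReal_sub_geProb_le hW hWe (fun ω => (hWpos ω).le) hp0 hp1 hmean heq hD)
      (by positivity)
  rw [← ofReal_integral_eq_lintegral_ofReal hD hDnn, ← ENNReal.ofReal_mul hp0.le]
  exact ENNReal.ofReal_le_ofReal hdTV
end

section
/- Fix 0 < p ≤ 1, set q = 1 − p, and let B be a set of positive integers. Define f: ℤ≥0 → ℝ by f(0) = 0 and f(k) = Σ_{i ∈ B} q^{i−1} − Σ_{i ∈ B, i ≥ k+1} q^{i−k−1} for k ≥ 1. Then f satisfies q·f(k) − f(k−1) = 1[k ∈ B] − Ge(p){B} for all k ≥ 1, and sup_{k ≥ 1} |f(k) − f(k−1)| ≤ 1. Moreover, if B = {m} is a singleton, then sup_{k ≥ 0} |f(k)| ≤ 1. -/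
open MeasureTheory ProbabilityTheory Real Classical

/-!
Write `T k = ∑_{i ∈ B, i > k} q^(i-k-1)`, so that `f k = T 0 - T k`. Splitting off the first
term gives `T (k-1) = 1[k ∈ B] + q T k`, which is the Stein equation once `Ge(p){B} = p T 0` is
substituted. Since `0 ≤ T k ≤ ∑ q^j = 1/p`, the increment `f k - f (k-1) = T (k-1) - T k =
1[k ∈ B] - p T k` lies in `[-1, 1]`; for `B = {m}` moreover `T k ∈ {0, q^(m-k-1)} ⊆ [0, 1]`.
-/

noncomputable def tailSum (B : Set ℕ) (q : ℝ) (k : ℕ) : ℝ :=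
  ∑' j : ℕ, if k + 1 + j ∈ B then q ^ j else 0

namespace tailSum

variable {B : Set ℕ} {q : ℝ}

theorem eq_tsum_subtype (B : Set ℕ) (q : ℝ) (k : ℕ) :
    tailSum B q k = ∑' i : {i : ℕ // i ∈ B ∧ k + 1 ≤ i}, q ^ ((i : ℕ) - k - 1) := by
  refine Eq.trans ?_ (tsum_subtype {i | i ∈ B ∧ k + 1 ≤ i} (fun i => q ^ (i - k - 1))).symm
  rw [← (add_right_injective (k + 1)).tsum_eq]
  · refine tsum_congr fun j => ?_
    simp only [Set.indicator_apply, Set.mem_ofPred_eq, show k + 1 ≤ k + 1 + j by omega,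
      and_true, show k + 1 + j - k - 1 = j by omega]
  · intro i hi
    obtain ⟨-, hki⟩ := Set.mem_of_indicator_ne_zero hi
    exact ⟨i - (k + 1), by simp only; omega⟩

theorem zero_eq_tsum (hB : ∀ i ∈ B, 1 ≤ i) :
    tailSum B q 0 = ∑' i : B, q ^ ((i : ℕ) - 1) := by
  rw [eq_tsum_subtype]
  exact ((Equiv.subtypeEquivRight fun i => ⟨fun h => ⟨h, hB i h⟩, And.left⟩).tsum_eq
    (fun i : {i : ℕ // i ∈ B ∧ 0 + 1 ≤ i} => q ^ ((i : ℕ) - 0 - 1))).symm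

theorem summable_terms (hq : |q| < 1) (k : ℕ) :
    Summable fun j : ℕ => if k + 1 + j ∈ B then q ^ j else 0 :=
  (summable_geometric_of_abs_lt_one hq).abs.of_norm_bounded fun j => by
    split_ifs <;> simp

theorem eq_ite_add_mul_succ (hq : |q| < 1) (n : ℕ) :
    tailSum B q n = (if n + 1 ∈ B then 1 else 0) + q * tailSum B q (n + 1) := by
  rw [tailSum, (summable_terms hq n).tsum_eq_zero_add, tailSum, ← tsum_mul_left]
  congr 1
  refine tsum_congr fun j => ?_
  rw [show n + 1 + (j + 1) = n + 1 + 1 + j by omega]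
  split_ifs <;> ring

theorem nonneg (hq : 0 ≤ q) (k : ℕ) : 0 ≤ tailSum B q k :=
  tsum_nonneg fun j => by split_ifs <;> positivity

theorem le_inv_one_sub (hq0 : 0 ≤ q) (hq1 : q < 1) (k : ℕ) : tailSum B q k ≤ (1 - q)⁻¹ := by
  rw [← tsum_geometric_of_lt_one hq0 hq1]
  refine (summable_terms (abs_lt.2 ⟨by linarith, hq1⟩) k).tsum_le_tsum (fun j => ?_)
    (summable_geometric_of_lt_one hq0 hq1)
  split_ifs
  · exact le_rfl
  · positivity

theorem abs_sub_succ_le_one (hq0 : 0 ≤ q) (hq1 : q < 1) (n : ℕ) :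
    |tailSum B q n - tailSum B q (n + 1)| ≤ 1 := by
  have hT0 := nonneg (B := B) hq0 (n + 1)
  have hT1 : (1 - q) * tailSum B q (n + 1) ≤ 1 := by
    have := le_inv_one_sub (B := B) hq0 hq1 (n + 1)
    rwa [← le_div_iff₀' (by linarith), one_div]
  rw [eq_ite_add_mul_succ (abs_lt.2 ⟨by linarith, hq1⟩) n, abs_le]
  constructor <;> split_ifs <;> nlinarith

theorem singleton (q : ℝ) (m k : ℕ) :
    tailSum {m} q k = if k + 1 ≤ m then q ^ (m - (k + 1)) else 0 := by
  simp only [tailSum, Set.mem_singleton_iff]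
  split_ifs with h
  · rw [tsum_eq_single (m - (k + 1)) fun j hj => if_neg (by omega), if_pos (by omega)]
  · convert tsum_zero with j
    exact if_neg (by omega)

theorem singleton_le_one (hq0 : 0 ≤ q) (hq1 : q ≤ 1) (m k : ℕ) : tailSum {m} q k ≤ 1 := by
  rw [singleton]
  split_ifs
  · exact pow_le_one₀ hq0 hq1
  · exact zero_le_one

end tailSum

theorem stein_solution_properties
    (p : ℝ) (hp0 : 0 < p) (hp1 : p ≤ 1) (q : ℝ) (hq : q = 1 - p)
    (B : Set ℕ) (hB : ∀ i ∈ B, 1 ≤ i)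
    (f : ℕ → ℝ) (hf0 : f 0 = 0)
    (hf : ∀ k : ℕ, 1 ≤ k →
      f k = (∑' i : B, q ^ ((i : ℕ) - 1))
        - ∑' i : {i : ℕ // i ∈ B ∧ k + 1 ≤ i}, q ^ ((i : ℕ) - k - 1)) :
    (∀ k : ℕ, 1 ≤ k →
      q * f k - f (k - 1)
        = (if k ∈ B then (1 : ℝ) else 0) - ∑' i : B, (1 - p) ^ ((i : ℕ) - 1) * p)
    ∧ (∀ k : ℕ, 1 ≤ k → |f k - f (k - 1)| ≤ 1)
    ∧ (∀ m : ℕ, B = {m} → ∀ k : ℕ, |f k| ≤ 1) := by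
  subst hq
  have hq0 : 0 ≤ 1 - p := by linarith
  have hq1 : 1 - p < 1 := by linarith
  have hf_eq : ∀ k, f k = tailSum B (1 - p) 0 - tailSum B (1 - p) k := by
    rintro (_ | k)
    · rw [hf0, sub_self]
    · rw [hf (k + 1) k.succ_pos, tailSum.zero_eq_tsum hB, tailSum.eq_tsum_subtype]
  have h_mass : ∑' i : B, (1 - p) ^ ((i : ℕ) - 1) * p = p * tailSum B (1 - p) 0 := by
    rw [tsum_mul_right, tailSum.zero_eq_tsum hB, mul_comm]
  refine ⟨?_, ?_, ?_⟩
  · rintro (_ | n) hn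
    · omega
    rw [h_mass, hf_eq, hf_eq, Nat.add_sub_cancel,
      tailSum.eq_ite_add_mul_succ (abs_lt.2 ⟨by linarith, hq1⟩) n]
    ring
  · rintro (_ | n) hn
    · omega
    rw [hf_eq, hf_eq, Nat.add_sub_cancel, sub_sub_sub_cancel_left]
    exact tailSum.abs_sub_succ_le_one hq0 hq1 n
  · rintro m rfl k
    rw [hf_eq]
    exact abs_sub_le_of_nonneg_of_le (tailSum.nonneg hq0 0)
      (tailSum.singleton_le_one hq0 hq1.le m 0) (tailSum.nonneg hq0 k)
      (tailSum.singleton_le_one hq0 hq1.le m k)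
end

section
/- Let 0 < a ≤ 1 and 0 ≤ μ ≤ 1. Let M have distribution Ge⁰(a) and, conditional on M, let W have the binomial distribution with parameters M and μ. Then W has distribution Ge⁰(a/(a + μ(1−a))); that is, P(W = k) = (1−p)^k p with p = a/(a + μ(1−a)) for all k = 0,1,2,.... -/
open MeasureTheory

/-! Summing over the value `m` of `M`,
`P(W = k) = ∑ₘ a (1-a)^m C(m,k) b^k (1-b)^(m-k) = a ((1-a) b)^k ∑ⱼ C(j+k,k) ((1-a)(1-b))^j`,
and the negative binomial series evaluates the last sum to `1 / (a + b(1-a))^(k+1)`. -/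

theorem hasSum_toReal_measure_preimage_singleton_inter {Ω α : Type*} [MeasurableSpace Ω]
    [MeasurableSpace α] [MeasurableSingletonClass α] [Countable α] (μ : Measure Ω)
    [IsFiniteMeasure μ] {f : Ω → α} (hf : Measurable f) {s : Set Ω} (hs : MeasurableSet s) :
    HasSum (fun x ↦ (μ (f ⁻¹' {x} ∩ s)).toReal) (μ s).toReal := by
  have hdisj : Pairwise (Function.onFun Disjoint fun x ↦ f ⁻¹' {x} ∩ s) := fun x y hxy ↦
    ((Set.disjoint_singleton.2 hxy).preimage f).mono Set.inter_subset_left Set.inter_subset_left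
  have hunion : ⋃ x, f ⁻¹' {x} ∩ s = s := by ext; simp
  have hsum := measure_iUnion (μ := μ) hdisj fun x ↦ (hf (measurableSet_singleton x)).inter hs
  rw [hunion] at hsum
  rw [hsum, ENNReal.tsum_toReal_eq fun _ ↦ measure_ne_top μ _]
  exact ENNReal.hasSum_toReal (hsum ▸ measure_ne_top μ s)

theorem hasSum_choose_mul_pow_sub {𝕜 : Type*} [NormedField 𝕜] [CompleteSpace 𝕜] (k : ℕ) {r : 𝕜}
    (hr : ‖r‖ < 1) :
    HasSum (fun m ↦ (m.choose k : 𝕜) * r ^ (m - k)) (1 / (1 - r) ^ (k + 1)) := by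
  rw [← hasSum_nat_add_iff' k]
  have hhead : ∑ m ∈ Finset.range k, (m.choose k : 𝕜) * r ^ (m - k) = 0 :=
    Finset.sum_eq_zero fun m hm ↦ by
      rw [Nat.choose_eq_zero_of_lt (Finset.mem_range.1 hm), Nat.cast_zero, zero_mul]
  simpa [hhead] using hasSum_choose_mul_geometric_of_norm_lt_one k hr

theorem hasSum_pow_mul_choose_mul_binomial {𝕜 : Type*} [NormedField 𝕜] [CompleteSpace 𝕜]
    (k : ℕ) {q b : 𝕜} (hqb : ‖q * (1 - b)‖ < 1) :
    HasSum (fun m ↦ q ^ m * m.choose k * b ^ k * (1 - b) ^ (m - k))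
      ((q * b) ^ k / (1 - q * (1 - b)) ^ (k + 1)) := by
  have h := (hasSum_choose_mul_pow_sub k hqb).mul_left ((q * b) ^ k)
  rw [mul_one_div] at h
  refine (funext fun m ↦ ?_ : (fun m : ℕ ↦ _) = _) ▸ h
  obtain hmk | hkm := lt_or_ge m k
  · simp [Nat.choose_eq_zero_of_lt hmk]
  · obtain ⟨j, rfl⟩ := Nat.exists_eq_add_of_le hkm
    simp only [Nat.add_sub_cancel_left, pow_add, mul_pow]
    ring

theorem geometric_binomial_mixture
    {Ω : Type*} [MeasurableSpace Ω] (μ : Measure Ω) [IsProbabilityMeasure μ]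
    (a b : ℝ) (ha0 : 0 < a) (ha1 : a ≤ 1) (hb0 : 0 ≤ b) (hb1 : b ≤ 1)
    (M W : Ω → ℕ) (hM : Measurable M) (hW : Measurable W)
    -- `M` is geometric on `{0,1,2,...}` with parameter `a`
    (hMlaw : ∀ k : ℕ, (μ {ω | M ω = k}).toReal = (1 - a) ^ k * a)
    (hWle : ∀ ω, W ω ≤ M ω)
    -- conditional on `M`, `W` has the binomial distribution with parameters `M` and `b`
    (hcond : ∀ m k : ℕ, k ≤ m →
      (μ {ω | M ω = m ∧ W ω = k}).toReal
        = (μ {ω | M ω = m}).toReal * (m.choose k) * b ^ k * (1 - b) ^ (m - k)) :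
    ∀ k : ℕ, (μ {ω | W ω = k}).toReal
      = (1 - a / (a + b * (1 - a))) ^ k * (a / (a + b * (1 - a))) := by
  intro k
  have hfiber (m : ℕ) : (μ (M ⁻¹' {m} ∩ {ω | W ω = k})).toReal
      = a * ((1 - a) ^ m * m.choose k * b ^ k * (1 - b) ^ (m - k)) := by
    obtain hkm | hmk := le_or_gt k m
    · change (μ {ω | M ω = m ∧ W ω = k}).toReal = _
      rw [hcond m k hkm, hMlaw]
      ring
    · have hempty : M ⁻¹' {m} ∩ {ω | W ω = k} = ∅ :=
        Set.eq_empty_of_forall_notMem fun ω ⟨(hMω : M ω = m), (hWω : W ω = k)⟩ ↦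
          (hWle ω).not_gt (hMω ▸ hWω ▸ hmk)
      simp [hempty, Nat.choose_eq_zero_of_lt hmk]
  have hnorm : ‖(1 - a) * (1 - b)‖ < 1 := by
    rw [Real.norm_of_nonneg (by nlinarith)]
    nlinarith
  have hsum := hasSum_toReal_measure_preimage_singleton_inter μ hM
    (s := {ω | W ω = k}) (hW (measurableSet_singleton k))
  simp only [hfiber] at hsum
  rw [hsum.unique ((hasSum_pow_mul_choose_mul_binomial k hnorm).mul_left a)]
  have hr : 0 < a + b * (1 - a) := by nlinarith
  rw [show 1 - (1 - a) * (1 - b) = a + b * (1 - a) by ring, one_sub_div hr.ne', div_pow]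
  field_simp
  ring
end

section
/- Fix n ≥ 1. Let X₁, ..., X_n be independent random variables with Xᵢ Bernoulli with success probability 1/(n − i + 1), let N be uniformly distributed on {1, 2, ..., n} and independent of the Xᵢ, and let W = Σ_{i=1}^N Xᵢ. (W is distributed as the in-degree of a uniformly random node in the uniform attachment random graph on n nodes, in which node m attaches a directed edge to a node chosen uniformly among the m nodes present, the initial node having a single loop.) Then dTV(L(W), Ge⁰(1/2)) ≤ 1/n. -/
open MeasureTheory ProbabilityTheory Real

/-- `Ge⁰(p){B}`: probability that a geometric random variable on `{0,1,2,...}`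
with parameter `p` (mass `(1-p)^k p` at `k`) lies in `B ⊆ ℕ`. -/
noncomputable def ge0ProbN (p : ℝ) (B : Set ℕ) : ℝ :=
  ∑' k : ℕ, B.indicator (fun _ => (1 - p) ^ k * p) k

/-- Total variation distance between the law of a `ℕ`-valued random
variable `W` (under `μ`) and the geometric distribution `Ge⁰(p)` on `{0,1,2,...}`. -/
noncomputable def dTVGe0N {Ω : Type*} [MeasurableSpace Ω] (μ : Measure Ω)
    (W : Ω → ℕ) (p : ℝ) : ℝ :=
  ⨆ B : Set ℕ, |(μ {ω | W ω ∈ B}).toReal - ge0ProbN p B|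

/-!
Let `S m = X₁ + ⋯ + X_m` and `Q_m` its probability generating series, so that
`n · pgf W = Q₁ + ⋯ + Q_n`. Since `X_{m+1}` has success probability `1/(n-m)`,
`(n-m) Q_{m+1} = (n-m-1+z) Q_m`, i.e. `(n-m) Q_{m+1} - (n-m+1) Q_m = (z-2) Q_m`; telescoping gives
`(2-z) · n · pgf W = n + (Q_n - 1)(1 - z)`. Dividing by `2 - z`, whose inverse is the generating
series `G` of `Ge⁰(1/2)`, yields `2n (pgf W - G) = Q_n + zG - 1 - Q_n zG`: a combination of four
probability distributions with signs `+ + - -`, whose mass on any set lies in `[-2, 2]`.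
-/

open PowerSeries Finset

def IsProbSeries (F : ℝ⟦X⟧) : Prop :=
  (∀ k, 0 ≤ coeff k F) ∧ HasSum (fun k => coeff k F) 1

noncomputable def massOn (F : ℝ⟦X⟧) (s : Set ℕ) : ℝ :=
  ∑' k, s.indicator (fun k => coeff k F) k

lemma isProbSeries_one : IsProbSeries 1 := by
  refine ⟨fun k => ?_, ?_⟩
  · rw [coeff_one]; split_ifs <;> norm_num
  · simp only [coeff_one]; exact hasSum_ite_eq 0 1

lemma isProbSeries_X : IsProbSeries X := by
  refine ⟨fun k => ?_, ?_⟩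
  · rw [coeff_X]; split_ifs <;> norm_num
  · simp only [coeff_X]; exact hasSum_ite_eq 1 1

namespace IsProbSeries

variable {F G : ℝ⟦X⟧}

lemma summable_norm (hF : IsProbSeries F) : Summable fun k => ‖coeff k F‖ := by
  simpa only [Real.norm_of_nonneg (hF.1 _)] using hF.2.summable

lemma mul (hF : IsProbSeries F) (hG : IsProbSeries G) : IsProbSeries (F * G) := by
  refine ⟨fun k => ?_, ?_⟩
  · rw [coeff_mul]
    exact Finset.sum_nonneg fun _ _ => mul_nonneg (hF.1 _) (hG.1 _)
  · simp only [coeff_mul]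
    have h := tsum_mul_tsum_eq_tsum_sum_antidiagonal_of_summable_norm hF.summable_norm
      hG.summable_norm
    rw [hF.2.tsum_eq, hG.2.tsum_eq, one_mul] at h
    rw [h]
    exact (summable_norm_sum_mul_antidiagonal_of_summable_norm hF.summable_norm
      hG.summable_norm).of_norm.hasSum

lemma hasSum_indicator (hF : IsProbSeries F) (s : Set ℕ) :
    HasSum (s.indicator fun k => coeff k F) (massOn F s) :=
  (hF.2.summable.indicator s).hasSum

lemma massOn_nonneg (hF : IsProbSeries F) (s : Set ℕ) : 0 ≤ massOn F s :=
  tsum_nonneg fun k => Set.indicator_nonneg (fun k _ => hF.1 k) k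

lemma massOn_le_one (hF : IsProbSeries F) (s : Set ℕ) : massOn F s ≤ 1 :=
  hasSum_le (fun k => Set.indicator_le_self' (fun k _ => hF.1 k) k) (hF.hasSum_indicator s) hF.2

lemma abs_massOn_sub_le {P Q F₁ F₂ G₁ G₂ : ℝ⟦X⟧} (hP : IsProbSeries P) (hQ : IsProbSeries Q)
    (hF₁ : IsProbSeries F₁) (hF₂ : IsProbSeries F₂) (hG₁ : IsProbSeries G₁)
    (hG₂ : IsProbSeries G₂) {c : ℝ} (hc : 0 < c) (h : C c * (P - Q) = F₁ + F₂ - G₁ - G₂)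
    (s : Set ℕ) : |massOn P s - massOn Q s| ≤ 2 / c := by
  have hmass : c * (massOn P s - massOn Q s) =
      massOn F₁ s + massOn F₂ s - massOn G₁ s - massOn G₂ s := by
    have hcoeff : ∀ k, c * (coeff k P - coeff k Q) =
        coeff k F₁ + coeff k F₂ - coeff k G₁ - coeff k G₂ := fun k => by
      simpa only [coeff_C_mul, map_sub, map_add] using congrArg (coeff k) h
    have hlhs := ((hP.hasSum_indicator s).sub (hQ.hasSum_indicator s)).mul_left c
    have hrhs := (((hF₁.hasSum_indicator s).add (hF₂.hasSum_indicator s)).sub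
      (hG₁.hasSum_indicator s)).sub (hG₂.hasSum_indicator s)
    refine hlhs.unique (hrhs.congr_fun fun k => ?_)
    by_cases hk : k ∈ s
    · simp [hk, hcoeff k]
    · simp [hk]
  rw [le_div_iff₀ hc, ← abs_of_pos hc, ← abs_mul, mul_comm, hmass, abs_le]
  constructor <;> linarith [hF₁.massOn_nonneg s, hF₂.massOn_nonneg s, hG₁.massOn_nonneg s,
    hG₂.massOn_nonneg s, hF₁.massOn_le_one s, hF₂.massOn_le_one s, hG₁.massOn_le_one s,
    hG₂.massOn_le_one s]

end IsProbSeries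

noncomputable def geomSeries (p : ℝ) : ℝ⟦X⟧ := mk fun k => (1 - p) ^ k * p

lemma isProbSeries_geomSeries {p : ℝ} (hp0 : 0 < p) (hp1 : p ≤ 1) :
    IsProbSeries (geomSeries p) := by
  simp only [IsProbSeries, geomSeries, coeff_mk]
  refine ⟨fun k => mul_nonneg (pow_nonneg (by linarith) k) hp0.le, ?_⟩
  have h := (hasSum_geometric_of_lt_one (by linarith) (by linarith : 1 - p < 1)).mul_right p
  rwa [sub_sub_cancel, inv_mul_cancel₀ hp0.ne'] at h

lemma ge0ProbN_eq_massOn_geomSeries (p : ℝ) (s : Set ℕ) :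
    ge0ProbN p s = massOn (geomSeries p) s :=
  tsum_congr fun k => by by_cases hk : k ∈ s <;> simp [hk, geomSeries]

lemma one_sub_mul_geomSeries (p : ℝ) : (1 - C (1 - p) * X) * geomSeries p = C p := by
  ext (_ | k)
  · simp [geomSeries]
  · simp only [map_sub, sub_mul, one_mul, mul_assoc, geomSeries, coeff_mk, coeff_succ_X_mul,
      coeff_C_mul, coeff_succ_C, pow_succ]
    ring

lemma two_sub_X_mul_geomSeries_half : (2 - X) * geomSeries (1 / 2) = 1 := by
  have h := congrArg (C (2 : ℝ) * ·) (one_sub_mul_geomSeries (1 / 2))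
  simp only [← mul_assoc, mul_sub, ← map_mul] at h
  norm_num at h
  exact h

lemma C_two_mul_mul_sub_geomSeries_half {a : ℝ} {P Q : ℝ⟦X⟧}
    (h : (2 - X) * (C a * P) = C a + (Q - 1) * (1 - X)) :
    C (2 * a) * (P - geomSeries (1 / 2)) =
      Q + X * geomSeries (1 / 2) - 1 - Q * (X * geomSeries (1 / 2)) := by
  have hX : (2 - X : ℝ⟦X⟧) ≠ 0 := fun h0 => by
    have := congrArg constantCoeff h0
    rw [map_sub, map_ofNat constantCoeff 2, constantCoeff_X] at this
    norm_num at this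
  refine mul_left_cancel₀ hX ?_
  rw [map_mul, map_ofNat]
  linear_combination 2 * h + (-2 * C a + (Q - 1) * X) * two_sub_X_mul_geomSeries_half

lemma two_sub_mul_sum_Icc {R : Type*} [CommRing R] (x : R) (Q : ℕ → R) (n : ℕ)
    (h0 : Q 0 = 1) (hstep : ∀ m < n, ((n : R) - m) * Q (m + 1) = Q m * (n - m - 1 + x)) :
    (2 - x) * ∑ m ∈ Icc 1 n, Q m = n + (Q n - 1) * (1 - x) := by
  have htel : ∑ m ∈ range n, (((n : R) - (m + 1 : ℕ) + 1) * Q (m + 1) - (n - m + 1) * Q m)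
      = (x - 2) * ∑ m ∈ range n, Q m := by
    rw [Finset.mul_sum]
    refine Finset.sum_congr rfl fun m hm => ?_
    push_cast
    linear_combination hstep m (Finset.mem_range.mp hm)
  rw [Finset.sum_range_sub (fun m => ((n : R) - m + 1) * Q m), h0] at htel
  have hIcc : ∑ m ∈ Icc 1 n, Q m = ∑ m ∈ range n, Q m + Q n - Q 0 := by
    rw [← Finset.sum_range_succ, Finset.range_eq_Ico, Finset.sum_eq_sum_Ico_succ_bot (by omega),
      Finset.Ico_add_one_right_eq_Icc]
    simp
  rw [hIcc, h0]
  push_cast at htel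
  linear_combination htel

section Pgf

variable {Ω : Type*} [MeasurableSpace Ω] {μ : Measure Ω}

noncomputable def pgf (μ : Measure Ω) (S : Ω → ℕ) : ℝ⟦X⟧ := mk fun k => μ.real (S ⁻¹' {k})

lemma hasSum_indicator_measureReal_preimage_singleton [IsFiniteMeasure μ] {S : Ω → ℕ}
    (hS : Measurable S) (s : Set ℕ) :
    HasSum (s.indicator fun k => μ.real (S ⁻¹' {k})) (μ.real (S ⁻¹' s)) := by
  rw [← hasSum_subtype_iff_indicator]
  have h := tsum_measure_preimage_singleton s.to_countable (μ := μ)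
    fun k _ => hS (measurableSet_singleton k)
  have hsum := ENNReal.hasSum_toReal (h ▸ measure_ne_top μ _)
  rwa [← ENNReal.tsum_toReal_eq fun _ => measure_ne_top μ _, h] at hsum

lemma isProbSeries_pgf [IsProbabilityMeasure μ] {S : Ω → ℕ} (hS : Measurable S) :
    IsProbSeries (pgf μ S) := by
  refine ⟨fun k => by simp only [pgf, coeff_mk]; exact measureReal_nonneg, ?_⟩
  simpa [pgf] using hasSum_indicator_measureReal_preimage_singleton (μ := μ) hS Set.univ

lemma massOn_pgf [IsFiniteMeasure μ] {S : Ω → ℕ} (hS : Measurable S) (s : Set ℕ) :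
    massOn (pgf μ S) s = μ.real (S ⁻¹' s) := by
  simpa only [massOn, pgf, coeff_mk] using
    (hasSum_indicator_measureReal_preimage_singleton hS s).tsum_eq

lemma pgf_zero [IsProbabilityMeasure μ] : pgf μ 0 = 1 := by
  ext k
  by_cases hk : k = 0
  · simp [pgf, hk, Pi.zero_def]
  · simp [pgf, hk, Pi.zero_def, Ne.symm hk]

lemma measureReal_preimage_inter_eq_mul {β γ : Type*} [MeasurableSpace β] [MeasurableSpace γ]
    {f : Ω → β} {g : Ω → γ} (hfg : IndepFun f g μ) {s : Set β} {t : Set γ}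
    (hs : MeasurableSet s) (ht : MeasurableSet t) :
    μ.real (f ⁻¹' s ∩ g ⁻¹' t) = μ.real (f ⁻¹' s) * μ.real (g ⁻¹' t) := by
  simp only [measureReal_def, hfg.measure_inter_preimage_eq_mul _ _ hs ht, ENNReal.toReal_mul]

lemma pgf_add_of_indepFun [IsProbabilityMeasure μ] {S Y : Ω → ℕ} (hS : Measurable S)
    (hY : Measurable Y) (hY1 : ∀ ω, Y ω ≤ 1) (hSY : IndepFun S Y μ) :
    pgf μ (S + Y) =
      pgf μ S * (C (1 - μ.real (Y ⁻¹' {1})) + C (μ.real (Y ⁻¹' {1})) * X) := by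
  have hY0 : μ.real (Y ⁻¹' {0}) = 1 - μ.real (Y ⁻¹' {1}) := by
    rw [← probReal_compl_eq_one_sub (hY (measurableSet_singleton 1))]
    congr 1
    ext ω
    have := hY1 ω
    simp only [Set.mem_preimage, Set.mem_singleton_iff, Set.mem_compl_iff]
    omega
  have hprod := fun a b => measureReal_preimage_inter_eq_mul hSY
    (measurableSet_singleton a) (measurableSet_singleton b)
  rw [mul_add, mul_comm (C _) X, ← mul_assoc]
  ext (_ | k)
  · have hset : (S + Y) ⁻¹' {0} = S ⁻¹' {0} ∩ Y ⁻¹' {0} := by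
      ext ω
      simp only [Set.mem_preimage, Set.mem_singleton_iff, Set.mem_inter_iff, Pi.add_apply]
      omega
    simp only [pgf, coeff_mk, map_add, coeff_mul_C, coeff_zero_mul_X]
    rw [hset, hprod, hY0]
    ring
  · have hset : (S + Y) ⁻¹' {k + 1} =
        (S ⁻¹' {k + 1} ∩ Y ⁻¹' {0}) ∪ (S ⁻¹' {k} ∩ Y ⁻¹' {1}) := by
      ext ω
      have := hY1 ω
      simp only [Set.mem_preimage, Set.mem_singleton_iff, Set.mem_inter_iff, Set.mem_union,
        Pi.add_apply]
      omega
    have hdisj : Disjoint (S ⁻¹' {k + 1} ∩ Y ⁻¹' {0}) (S ⁻¹' {k} ∩ Y ⁻¹' {1}) :=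
      Set.disjoint_left.2 fun ω h₀ h₁ => by
        simp only [Set.mem_preimage, Set.mem_singleton_iff, Set.mem_inter_iff] at h₀ h₁
        omega
    simp only [pgf, coeff_mk, map_add, coeff_mul_C, coeff_succ_mul_X]
    rw [hset, measureReal_union hdisj ((hS (measurableSet_singleton k)).inter
      (hY (measurableSet_singleton 1))), hprod, hprod, hY0]

lemma pgf_eq_sum_of_indepFun [IsFiniteMeasure μ] {S : ℕ → Ω → ℕ} {N : Ω → ℕ} {T : Finset ℕ}
    (hS : ∀ m, Measurable (S m)) (hN : Measurable N) (hNT : ∀ ω, N ω ∈ T)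
    (hNS : ∀ m, IndepFun N (S m) μ) :
    pgf μ (fun ω => S (N ω) ω) = ∑ m ∈ T, C (μ.real (N ⁻¹' {m})) * pgf μ (S m) := by
  ext k
  have hset : (fun ω => S (N ω) ω) ⁻¹' {k} = ⋃ m ∈ T, N ⁻¹' {m} ∩ S m ⁻¹' {k} := by
    ext ω
    simp only [Set.mem_preimage, Set.mem_singleton_iff, Set.mem_iUnion, Set.mem_inter_iff]
    exact ⟨fun h => ⟨N ω, hNT ω, rfl, h⟩, by rintro ⟨m, -, rfl, h⟩; exact h⟩
  have hdisj : (T : Set ℕ).PairwiseDisjoint fun m => N ⁻¹' {m} ∩ S m ⁻¹' {k} :=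
    fun m _ m' _ hm => Set.disjoint_left.2 fun ω h h' => hm (h.1.symm.trans h'.1)
  simp only [pgf, coeff_mk, map_sum, coeff_C_mul]
  rw [hset, measureReal_biUnion_finset hdisj fun m _ =>
    (hN (measurableSet_singleton m)).inter (hS m (measurableSet_singleton k))]
  exact Finset.sum_congr rfl fun m _ => measureReal_preimage_inter_eq_mul (hNS m)
    (measurableSet_singleton m) (measurableSet_singleton k)

lemma natCast_card_mul_pgf_of_uniform [IsFiniteMeasure μ] {S : ℕ → Ω → ℕ} {N : Ω → ℕ}
    {T : Finset ℕ} (hS : ∀ m, Measurable (S m)) (hN : Measurable N) (hNT : ∀ ω, N ω ∈ T)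
    (hNlaw : ∀ m ∈ T, μ.real (N ⁻¹' {m}) = 1 / #T) (hNS : ∀ m, IndepFun N (S m) μ) :
    C (#T : ℝ) * pgf μ (fun ω => S (N ω) ω) = ∑ m ∈ T, pgf μ (S m) := by
  rcases T.eq_empty_or_nonempty with rfl | hT
  · simp
  rw [pgf_eq_sum_of_indepFun hS hN hNT hNS, Finset.mul_sum]
  refine Finset.sum_congr rfl fun m hm => ?_
  rw [hNlaw m hm, ← mul_assoc, ← map_mul, mul_one_div_cancel (by simpa using hT.ne_empty),
    map_one, one_mul]

lemma measurable_comp_index {S : ℕ → Ω → ℕ} {N : Ω → ℕ} (hS : ∀ m, Measurable (S m))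
    (hN : Measurable N) : Measurable fun ω => S (N ω) ω :=
  (measurable_from_prod_countable_left (f := fun p : Ω × ℕ => S p.2 p.1) hS).comp
    (measurable_id.prodMk hN)

lemma indepFun_sum_of_iIndepFun_option {N : Ω → ℕ} {ξ : ℕ → Ω → ℕ} (hN : Measurable N)
    (hξ : ∀ i, Measurable (ξ i)) (h : iIndepFun (fun o : Option ℕ => Option.elim o N ξ) μ)
    (s : Finset ℕ) : IndepFun N (∑ i ∈ s, ξ i) μ := by
  have hmeas : ∀ o : Option ℕ, Measurable (Option.elim o N ξ) := by
    rintro (_ | i)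
    exacts [hN, hξ i]
  have hind := h.indepFun_finsetSum_of_notMem hmeas (s := s.map .some) (i := none) (by simp)
  rw [Finset.sum_map] at hind
  exact hind.symm

lemma natCast_sub_mul_pgf_sum_Icc_succ [IsProbabilityMeasure μ] {ξ : ℕ → Ω → ℕ}
    (hξ : ∀ i, Measurable (ξ i)) (hξ1 : ∀ i ω, ξ i ω ≤ 1) (hind : iIndepFun ξ μ) {n m : ℕ}
    (hm : m < n) (hp : μ.real (ξ (m + 1) ⁻¹' {1}) = 1 / ((n : ℝ) - (m + 1 : ℕ) + 1)) :
    ((n : ℝ⟦X⟧) - (m : ℝ⟦X⟧)) * pgf μ (∑ i ∈ Icc 1 (m + 1), ξ i) =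
      pgf μ (∑ i ∈ Icc 1 m, ξ i) * ((n : ℝ⟦X⟧) - (m : ℝ⟦X⟧) - 1 + X) := by
  rw [Finset.sum_Icc_succ_top (by omega), pgf_add_of_indepFun
    (by fun_prop) (hξ _) (hξ1 _)
    (hind.indepFun_finsetSum_of_notMem hξ (by simp)), hp, mul_left_comm]
  congr 1
  have hnm : (n : ℝ) - m ≠ 0 := sub_ne_zero.2 (Nat.cast_injective.ne hm.ne')
  have hp' : 1 / ((n : ℝ) - (m + 1 : ℕ) + 1) = ((n : ℝ) - m)⁻¹ := by push_cast; ring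
  have hC : (n : ℝ⟦X⟧) - (m : ℝ⟦X⟧) = C ((n : ℝ) - m) := by simp
  rw [hp', hC, mul_add, ← mul_assoc, ← map_mul, ← map_mul, mul_sub, mul_one,
    mul_inv_cancel₀ hnm, map_one, one_mul, map_sub, map_sub, map_natCast, map_natCast, map_one]

lemma dTVGe0N_half_le [IsProbabilityMeasure μ] {W : Ω → ℕ} (hW : Measurable W) {Q : ℝ⟦X⟧}
    (hQ : IsProbSeries Q) {a : ℝ} (ha : 0 < a)
    (h : (2 - X) * (C a * pgf μ W) = C a + (Q - 1) * (1 - X)) :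
    dTVGe0N μ W (1 / 2) ≤ 1 / a := by
  have hG := isProbSeries_geomSeries (p := 1 / 2) (by norm_num) (by norm_num)
  refine Real.iSup_le (fun B => ?_) (by positivity)
  have hB := IsProbSeries.abs_massOn_sub_le (isProbSeries_pgf hW) hG hQ
    (isProbSeries_X.mul hG) isProbSeries_one (hQ.mul (isProbSeries_X.mul hG))
    (by positivity) (C_two_mul_mul_sub_geomSeries_half h) B
  rw [massOn_pgf hW, ← ge0ProbN_eq_massOn_geomSeries, div_mul_cancel_left₀ two_ne_zero] at hB
  exact hB.trans_eq (one_div _).symm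

end Pgf

theorem uniform_attachment_in_degree
    {Ω : Type*} [MeasurableSpace Ω] (μ : Measure Ω) [IsProbabilityMeasure μ]
    (n : ℕ) (hn : 1 ≤ n)
    (X : ℕ → Ω → ℕ) (N : Ω → ℕ)
    (hXmeas : ∀ i, Measurable (X i)) (hNmeas : Measurable N)
    -- `X i` is Bernoulli with success probability `1/(n - i + 1)` for `1 ≤ i ≤ n`
    (hXval : ∀ i ω, X i ω ≤ 1)
    (hXlaw : ∀ i : ℕ, 1 ≤ i → i ≤ n →
      (μ {ω | X i ω = 1}).toReal = 1 / ((n : ℝ) - i + 1))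
    -- `N` is uniform on `{1, ..., n}`
    (hNval : ∀ ω, 1 ≤ N ω ∧ N ω ≤ n)
    (hNlaw : ∀ k : ℕ, 1 ≤ k → k ≤ n → (μ {ω | N ω = k}).toReal = 1 / (n : ℝ))
    -- `N, X₁, X₂, ...` are jointly independent
    (hindep : iIndepFun
      (fun o : Option ℕ => Option.elim o N X) μ)
    (W : Ω → ℕ) (hW : ∀ ω, W ω = ∑ i ∈ Finset.Icc 1 (N ω), X i ω) :
    dTVGe0N μ W (1 / 2) ≤ 1 / (n : ℝ) := by
  set S : ℕ → Ω → ℕ := fun m => ∑ i ∈ Icc 1 m, X i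
  have hS : ∀ m, Measurable (S m) := fun m => by fun_prop
  have hWS : W = fun ω => S (N ω) ω := funext fun ω => by simp [S, hW, Finset.sum_apply]
  have hX := hindep.precomp (Option.some_injective ℕ)
  have hsum := two_sub_mul_sum_Icc PowerSeries.X (fun m => pgf μ (S m)) n
    (by simp [S, pgf_zero]) fun m hm =>
      natCast_sub_mul_pgf_sum_Icc_succ hXmeas hXval hX hm
        (hXlaw (m + 1) (by omega) hm)
  have hmix := natCast_card_mul_pgf_of_uniform hS hNmeas (fun ω => Finset.mem_Icc.2 (hNval ω))
    (fun m hm => by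
      rw [Nat.card_Icc, Nat.add_sub_cancel]
      exact hNlaw m (Finset.mem_Icc.1 hm).1 (Finset.mem_Icc.1 hm).2)
    fun m => indepFun_sum_of_iIndepFun_option hNmeas hXmeas hindep _
  rw [Nat.card_Icc, Nat.add_sub_cancel, ← hWS] at hmix
  refine dTVGe0N_half_le (hWS ▸ measurable_comp_index hS hNmeas)
    (isProbSeries_pgf (μ := μ) (hS n)) (by positivity) ?_
  rw [hmix, hsum, map_natCast]
end

section
/- For 1 ≤ i ≤ n, let W_{n,i} denote the total degree of vertex i in the preferential attachment graph on n vertices, defined in law by the Markov chain: W_{i,i} = 1 + B_i where B_i is Bernoulli with success probability 1/(2i−1), and for i < j ≤ n, conditional on W_{j−1,i}, W_{j,i} = W_{j−1,i} + B_j where B_j is Bernoulli with success probability W_{j−1,i}/(2j−1). Let I be uniformly distributed on {1, ..., n}, independent of the degree processes, and let Z have the Yule-Simon distribution, P(Z = k) = 4/(k(k+1)(k+2)) for k = 1,2,.... Then there is a constant C, independent of n, such that dTV(L(W_{n,I}), L(Z)) ≤ C · log(n)/n. -/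
open MeasureTheory ProbabilityTheory Real

/-- `Ge(p){B}`: probability that a geometric random variable on `{1,2,...}`
with parameter `p` (mass `(1-p)^{k-1} p` at `k`) lies in `B ⊆ ℕ`. -/
noncomputable def geProbN (p : ℝ) (B : Set ℕ) : ℝ :=
  ∑' k : ℕ, B.indicator (fun _ => (1 - p) ^ k * p) (k + 1)

/-- Total variation distance between the law of a `ℕ`-valued random
variable `W` (under `μ`) and the geometric distribution `Ge(p)` on `{1,2,...}`. -/
noncomputable def dTVGeN {Ω : Type*} [MeasurableSpace Ω] (μ : Measure Ω)
    (W : Ω → ℕ) (p : ℝ) : ℝ :=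
  ⨆ B : Set ℕ, |(μ {ω | W ω ∈ B}).toReal - geProbN p B|

/-- Probability assigned to `B ⊆ ℕ` by the Yule-Simon distribution,
with mass `4/(k(k+1)(k+2))` at `k ∈ {1,2,...}`. -/
noncomputable def yuleProb (B : Set ℕ) : ℝ :=
  ∑' k : ℕ, B.indicator (fun _ => 4 / (((k : ℝ) + 1) * ((k : ℝ) + 2) * ((k : ℝ) + 3))) (k + 1)

/-!
Let `N_j(k)` be the expected number of vertices of degree `k` at time `j` and
`p_k = 4/(k(k+1)(k+2))`. Conditioning on the previous step gives the exact recursion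
`N_{j+1}(k+1) = (1 - (k+1)/(2j+1)) N_j(k+1) + k/(2j+1) N_j(k) + P(W_{j+1,j+1} = k+1)`,
and since `k p_k = (k+3) p_{k+1}`, the sequence `j p_k` satisfies it up to the error
`(𝟙[k = 1] - p_{k+1})/(2j+1)`. Hence `e_j(k) = N_j(k) - j p_k` obeys
`|e_{j+1}(k+1)| ≤ (1 - (k+1)/(2j+1)) |e_j(k+1)| + k/(2j+1) |e_j(k)| + (𝟙[k = 1] + p_{k+1})/(2j+1)`.
Summed over `k`, the terms `k |e_j(k)|/(2j+1)` telescope, so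
`∑_k |e_{j+1}(k)| ≤ ∑_k |e_j(k)| + 2/(2j+1)` and `∑_k |e_n(k)| ≤ 2 H_n`. The law of `W_{n,I}`
gives mass `N_n(k)/n` to `k`, so its total variation distance to the Yule-Simon law is at most
`∑_k |e_n(k)|/n ≤ 2 H_n/n ≤ 2 (1 + log n)/n`.
-/

open Finset

noncomputable def yuleMass (k : ℕ) : ℝ := 4 / ((k : ℝ) * (k + 1) * (k + 2))

lemma yuleMass_nonneg (k : ℕ) : 0 ≤ yuleMass k := by
  unfold yuleMass; positivity

lemma mul_yuleMass {k : ℕ} (hk : 1 ≤ k) :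
    (k : ℝ) * yuleMass k = (k + 3) * yuleMass (k + 1) := by
  have : (0 : ℝ) < k := by exact_mod_cast hk
  unfold yuleMass; push_cast; field_simp; ring

lemma sum_range_yuleMass_succ (m : ℕ) :
    ∑ k ∈ range m, yuleMass (k + 1) = 1 - 2 / ((m + 1) * (m + 2)) := by
  induction m with
  | zero => norm_num
  | succ m ih =>
    rw [sum_range_succ, ih, yuleMass]; push_cast; field_simp; ring

lemma sum_range_yuleMass_succ_le_one (m : ℕ) : ∑ k ∈ range m, yuleMass (k + 1) ≤ 1 := by
  rw [sum_range_yuleMass_succ]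
  have : (0 : ℝ) ≤ 2 / ((m + 1) * (m + 2)) := by positivity
  linarith

lemma hasSum_yuleProb (B : Set ℕ) :
    HasSum (fun k => B.indicator yuleMass (k + 1)) (yuleProb B) := by
  have hsummable : Summable fun k => B.indicator yuleMass (k + 1) :=
    (summable_of_sum_range_le (fun k => yuleMass_nonneg _)
      sum_range_yuleMass_succ_le_one).of_nonneg_of_le
      (fun k => Set.indicator_nonneg (fun k _ => yuleMass_nonneg k) _)
      (fun k => Set.indicator_le_self' (fun k _ => yuleMass_nonneg k) _)
  convert hsummable.hasSum using 1
  unfold yuleProb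
  refine tsum_congr fun k => ?_
  by_cases hk : k + 1 ∈ B
  · simp only [Set.indicator_of_mem hk, yuleMass]
    push_cast
    ring
  · simp only [Set.indicator_of_notMem hk]

lemma norm_le_of_hasSum_of_sum_range_norm_le {E : Type*} [SeminormedAddCommGroup E]
    {f : ℕ → E} {a : E} {c : ℝ} (hf : HasSum f a) (h : ∀ K, ∑ k ∈ range K, ‖f k‖ ≤ c) :
    ‖a‖ ≤ c :=
  le_of_tendsto' (continuous_norm.tendsto a |>.comp hf.tendsto_sum_nat)
    fun K => (norm_sum_le _ _).trans (h K)

section OneStep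

variable {Ω : Type*} [MeasurableSpace Ω] {μ : Measure Ω} [IsFiniteMeasure μ] {X Y : Ω → ℕ}

lemma hasSum_measureReal_inter_level (hX : Measurable X) {s : Set Ω} (hs : MeasurableSet s) :
    HasSum (fun w => μ.real (s ∩ {ω | X ω = w})) (μ.real s) := by
  have hunion : ⋃ w, s ∩ {ω | X ω = w} = s := by ext ω; simp
  have hμ := measure_iUnion (μ := μ) (f := fun w => s ∩ {ω | X ω = w})
    (fun a b hab => Set.disjoint_left.2 fun ω ha hb => hab (ha.2.symm.trans hb.2))
    (fun w => hs.inter (hX (measurableSet_singleton w)))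
  rw [hunion] at hμ
  have := ENNReal.hasSum_toReal (hμ ▸ measure_ne_top μ s)
  rwa [← ENNReal.tsum_toReal_eq (fun _ => measure_ne_top μ _), ← hμ] at this

lemma hasSum_indicator_measureReal (hX : Measurable X) (B : Set ℕ) :
    HasSum (fun w => B.indicator (fun w => μ.real {ω | X ω = w}) w) (μ.real {ω | X ω ∈ B}) := by
  have hB : MeasurableSet {ω | X ω ∈ B} := hX B.to_countable.measurableSet
  convert hasSum_measureReal_inter_level (μ := μ) hX hB using 2 with w
  by_cases hw : w ∈ B
  · rw [Set.indicator_of_mem hw]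
    congr 1
    ext ω
    exact ⟨fun h => ⟨show X ω ∈ B from h ▸ hw, h⟩, And.right⟩
  · rw [Set.indicator_of_notMem hw, eq_comm, measureReal_eq_zero_iff]
    exact measure_mono_null (fun ω hω => hw (hω.2 ▸ hω.1)) measure_empty

/-- The one-step law of a degree that grows by one with probability (current degree)/`D`. -/
def AttachmentStep (μ : Measure Ω) (X Y : Ω → ℕ) (D : ℝ) : Prop :=
  ∀ w : ℕ, μ.real {ω | Y ω = w + 1 ∧ X ω = w} = μ.real {ω | X ω = w} * w / D ∧
    μ.real {ω | Y ω = w ∧ X ω = w} = μ.real {ω | X ω = w} * (1 - w / D)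

namespace AttachmentStep

variable {D : ℝ} (h : AttachmentStep μ X Y D) (hX : Measurable X) (hY : Measurable Y)
include h hX hY

lemma measureReal_inter_eq_zero {k w : ℕ} (hkw : k ≠ w) (hkw' : k ≠ w + 1) :
    μ.real ({ω | Y ω = k} ∩ {ω | X ω = w}) = 0 := by
  set A := {ω | Y ω = w + 1 ∧ X ω = w}
  set B := {ω | Y ω = w ∧ X ω = w}
  have hA : MeasurableSet A :=
    (hY (measurableSet_singleton _)).inter (hX (measurableSet_singleton _))
  have hB : MeasurableSet B :=
    (hY (measurableSet_singleton _)).inter (hX (measurableSet_singleton _))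
  have hAB : μ.real (A ∪ B) = μ.real {ω | X ω = w} := by
    have hdisj : Disjoint A B := Set.disjoint_left.2 fun ω ha hb => by
      have := ha.1.symm.trans hb.1; omega
    rw [measureReal_union hdisj hB, (h w).1, (h w).2]
    ring
  have hnull : μ.real ({ω | X ω = w} \ (A ∪ B)) = 0 := by
    rw [measureReal_sdiff (fun ω hω => by rcases hω with hω | hω <;> exact hω.2) (hA.union hB),
      hAB, sub_self]
  refine measureReal_mono_null ?_ hnull
  rintro ω ⟨hk, hw⟩
  refine ⟨hw, ?_⟩
  rintro (⟨h1, -⟩ | ⟨h1, -⟩)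
  · exact hkw' (hk.symm.trans h1)
  · exact hkw (hk.symm.trans h1)

lemma measureReal_eq_sum (k : ℕ) (s : Finset ℕ) (hs : ∀ w ∉ s, k ≠ w ∧ k ≠ w + 1) :
    μ.real {ω | Y ω = k} = ∑ w ∈ s, μ.real ({ω | Y ω = k} ∩ {ω | X ω = w}) :=
  (hasSum_measureReal_inter_level hX (hY (measurableSet_singleton k))).unique <|
    hasSum_sum_of_ne_finset_zero fun w hw =>
      h.measureReal_inter_eq_zero hX hY (hs w hw).1 (hs w hw).2

lemma measureReal_zero : μ.real {ω | Y ω = 0} = μ.real {ω | X ω = 0} := by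
  rw [h.measureReal_eq_sum hX hY 0 {0} fun w hw => by simp at hw; omega, sum_singleton]
  exact (h 0).2.trans (by simp)

lemma measureReal_succ (m : ℕ) :
    μ.real {ω | Y ω = m + 1}
      = (1 - (m + 1) / D) * μ.real {ω | X ω = m + 1} + m / D * μ.real {ω | X ω = m} := by
  rw [h.measureReal_eq_sum hX hY (m + 1) {m, m + 1} fun w hw => by simp at hw; omega,
    sum_pair (by omega)]
  change μ.real {ω | Y ω = m + 1 ∧ X ω = m} + μ.real {ω | Y ω = m + 1 ∧ X ω = m + 1} = _
  rw [(h m).1, (h (m + 1)).2]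
  push_cast
  ring

end AttachmentStep

end OneStep

section PrefAttach

variable {Ω : Type*} [MeasurableSpace Ω] {μ : Measure Ω}

structure IsPrefAttachDegrees (μ : Measure Ω) (V : ℕ → ℕ → Ω → ℕ) (n : ℕ) : Prop where
  measurable : ∀ i j, Measurable (V i j)
  init : ∀ i : ℕ, 1 ≤ i → i ≤ n →
    (∀ ω, V i i ω = 1 ∨ V i i ω = 2) ∧ μ.real {ω | V i i ω = 2} = 1 / (2 * (i : ℝ) - 1)
  step : ∀ i : ℕ, 1 ≤ i → ∀ j : ℕ, i ≤ j → j < n →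
    AttachmentStep μ (V i j) (V i (j + 1)) (2 * ((j : ℝ) + 1) - 1)

/-- The expected number of vertices of degree `k` at time `j`. -/
noncomputable def degreeCount (μ : Measure Ω) (V : ℕ → ℕ → Ω → ℕ) (j k : ℕ) : ℝ :=
  ∑ i ∈ Icc 1 j, μ.real {ω | V i j ω = k}

noncomputable def degreeError (μ : Measure Ω) (V : ℕ → ℕ → Ω → ℕ) (j k : ℕ) : ℝ :=
  degreeCount μ V j k - j * yuleMass k

namespace IsPrefAttachDegrees

variable {V : ℕ → ℕ → Ω → ℕ} {n : ℕ} (hV : IsPrefAttachDegrees μ V n)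
include hV

lemma measureReal_init_eq_zero {i k : ℕ} (hi : 1 ≤ i) (hin : i ≤ n) (hk₁ : k ≠ 1)
    (hk₂ : k ≠ 2) : μ.real {ω | V i i ω = k} = 0 := by
  have hempty : {ω | V i i ω = k} = ∅ :=
    Set.eq_empty_of_forall_notMem fun ω (hω : V i i ω = k) => by
      rcases (hV.init i hi hin).1 ω with h | h <;> omega
  rw [hempty, measureReal_empty]

lemma measureReal_eq_zero [IsFiniteMeasure μ] {i j k : ℕ} (hi : 1 ≤ i) (hij : i ≤ j) (hjn : j ≤ n)
    (hk : k = 0 ∨ j + 1 < k) : μ.real {ω | V i j ω = k} = 0 := by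
  induction j, hij using Nat.le_induction generalizing k with
  | base => exact hV.measureReal_init_eq_zero hi hjn (by omega) (by omega)
  | succ j hij ih =>
    have hstep := hV.step i hi j hij hjn
    have hX := hV.measurable i j
    have hY := hV.measurable i (j + 1)
    rcases hk with rfl | hk
    · rw [hstep.measureReal_zero hX hY, ih (by omega) (Or.inl rfl)]
    · obtain ⟨m, rfl⟩ : ∃ m, k = m + 1 := ⟨k - 1, by omega⟩
      rw [hstep.measureReal_succ hX hY, ih (by omega) (Or.inr (by omega)),
        ih (by omega) (Or.inr (by omega))]
      ring

lemma degreeCount_eq_zero [IsFiniteMeasure μ] {j k : ℕ} (hjn : j ≤ n) (hk : 2 * j < k) :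
    degreeCount μ V j k = 0 :=
  sum_eq_zero fun i hi => by
    rw [mem_Icc] at hi
    exact hV.measureReal_eq_zero hi.1 hi.2 hjn (Or.inr (by omega))

lemma degreeCount_succ [IsFiniteMeasure μ] {j : ℕ} (hjn : j < n) (m : ℕ) :
    degreeCount μ V (j + 1) (m + 1)
      = (1 - (m + 1) / (2 * j + 1)) * degreeCount μ V j (m + 1)
        + m / (2 * j + 1) * degreeCount μ V j m + μ.real {ω | V (j + 1) (j + 1) ω = m + 1} := by
  have hvertex : ∀ i ∈ Icc 1 j, μ.real {ω | V i (j + 1) ω = m + 1}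
      = (1 - (m + 1) / (2 * j + 1)) * μ.real {ω | V i j ω = m + 1}
        + m / (2 * j + 1) * μ.real {ω | V i j ω = m} := fun i hi => by
    rw [mem_Icc] at hi
    rw [(hV.step i hi.1 j hi.2 hjn).measureReal_succ (hV.measurable i j)
      (hV.measurable i (j + 1))]
    ring_nf
  rw [degreeCount, sum_Icc_succ_top (by omega), sum_congr rfl hvertex, sum_add_distrib,
    ← mul_sum, ← mul_sum]
  rfl

lemma hasSum_degreeCount [IsFiniteMeasure μ] (B : Set ℕ) :
    HasSum (fun k => B.indicator (degreeCount μ V n) (k + 1))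
      (∑ i ∈ Icc 1 n, μ.real {ω | V i n ω ∈ B}) := by
  have hvertex : ∀ i ∈ Icc 1 n,
      HasSum (fun k => B.indicator (fun w => μ.real {ω | V i n ω = w}) (k + 1))
        (μ.real {ω | V i n ω ∈ B}) := fun i hi => by
    rw [mem_Icc] at hi
    have := hasSum_indicator_measureReal (μ := μ) (hV.measurable i n) B
    rw [← hasSum_nat_add_iff' 1] at this
    have hzero : B.indicator (fun w => μ.real {ω | V i n ω = w}) 0 = 0 :=
      Set.indicator_apply_eq_zero.2 fun _ => hV.measureReal_eq_zero hi.1 hi.2 le_rfl (Or.inl rfl)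
    simpa [hzero] using this
  convert hasSum_sum hvertex using 1
  ext k
  by_cases hk : k + 1 ∈ B <;> simp [hk, degreeCount]

variable [IsProbabilityMeasure μ]

lemma measureReal_init_one {i : ℕ} (hi : 1 ≤ i) (hin : i ≤ n) :
    μ.real {ω | V i i ω = 1} = 1 - 1 / (2 * (i : ℝ) - 1) := by
  have hcompl : {ω | V i i ω = 1} = {ω | V i i ω = 2}ᶜ := by
    ext ω
    rcases (hV.init i hi hin).1 ω with h | h <;> simp [h]
  have hmeas : MeasurableSet {ω | V i i ω = 2} := hV.measurable i i (measurableSet_singleton 2)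
  rw [hcompl, probReal_compl_eq_one_sub hmeas, (hV.init i hi hin).2]

lemma degreeError_succ {j : ℕ} (hjn : j < n) (m : ℕ) :
    degreeError μ V (j + 1) (m + 1)
      = (1 - (m + 1) / (2 * j + 1)) * degreeError μ V j (m + 1)
        + m / (2 * j + 1) * degreeError μ V j m
        + ((if m = 1 then 1 else 0) - yuleMass (m + 1)) / (2 * j + 1) := by
  have hD : (2 * (j : ℝ) + 1) ≠ 0 := by positivity
  simp only [degreeError, hV.degreeCount_succ hjn m]
  match m with
  | 0 =>
    rw [hV.measureReal_init_one (i := j + 1) (by omega) hjn]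
    simp only [yuleMass]
    push_cast
    rw [show 2 * ((j : ℝ) + 1) - 1 = 2 * j + 1 by ring]
    field_simp
    ring
  | 1 =>
    rw [(hV.init (j + 1) (by omega) hjn).2]
    simp only [yuleMass]
    push_cast
    rw [show 2 * ((j : ℝ) + 1) - 1 = 2 * j + 1 by ring]
    field_simp
    ring
  | m + 2 =>
    rw [hV.measureReal_init_eq_zero (i := j + 1) (by omega) hjn (by omega) (by omega)]
    have hrec := mul_yuleMass (k := m + 2) (by omega)
    simp only [if_neg (by omega : m + 2 ≠ 1)]
    push_cast at hrec ⊢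
    field_simp
    linear_combination (j : ℝ) * hrec

lemma abs_degreeError_succ_le {j : ℕ} (hjn : j < n) (m : ℕ) :
    |degreeError μ V (j + 1) (m + 1)|
      ≤ (1 - (m + 1) / (2 * j + 1)) * |degreeError μ V j (m + 1)|
        + m / (2 * j + 1) * |degreeError μ V j m|
        + ((if m = 1 then 1 else 0) + yuleMass (m + 1)) / (2 * j + 1) := by
  set D : ℝ := 2 * j + 1 with hD_def
  have hD : 0 < D := by positivity
  set c := 1 - (m + 1) / D
  have hd : 0 ≤ m / D := by positivity
  have hr : |((if m = 1 then 1 else 0) - yuleMass (m + 1)) / D|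
      ≤ ((if m = 1 then 1 else 0) + yuleMass (m + 1)) / D := by
    rw [abs_div, abs_of_pos hD]
    gcongr
    refine (abs_sub _ _).trans_eq ?_
    rw [abs_of_nonneg (by positivity), abs_of_nonneg (yuleMass_nonneg _)]
  rw [hV.degreeError_succ hjn m]
  by_cases hc : 0 ≤ c
  · calc _ ≤ |c * degreeError μ V j (m + 1)| + |m / D * degreeError μ V j m|
            + |((if m = 1 then 1 else 0) - yuleMass (m + 1)) / D| := abs_add_three _ _ _
      _ ≤ _ := by
        rw [abs_mul, abs_mul, abs_of_nonneg hc, abs_of_nonneg hd]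
        gcongr
  · -- A negative first coefficient forces `m > 2j`, and no vertex has degree `m` at time `j`.
    have hm : 2 * j < m := by
      by_contra! hm
      refine hc (sub_nonneg.2 ((div_le_one hD).2 ?_))
      have : (m : ℝ) ≤ 2 * j := by exact_mod_cast hm
      linarith
    have hzero : ∀ k, 2 * j < k → degreeError μ V j k = -(j * yuleMass k) := fun k hk => by
      rw [degreeError, hV.degreeCount_eq_zero hjn.le hk, zero_sub]
    have hrec := mul_yuleMass (k := m) (by omega)
    have hy₁ := yuleMass_nonneg (m + 1)
    have hy₀ := yuleMass_nonneg m
    have hX : 0 ≤ c * (j * yuleMass (m + 1)) + m / D * (j * yuleMass m) := by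
      have : c * (j * yuleMass (m + 1)) + m / D * (j * yuleMass m)
          = j * (D + 2) / D * yuleMass (m + 1) := by
        simp only [c]
        field_simp
        linear_combination (j : ℝ) * hrec
      rw [this]
      positivity
    rw [hzero (m + 1) (by omega), hzero m hm, abs_neg, abs_neg,
      abs_of_nonneg (a := j * yuleMass (m + 1)) (by positivity),
      abs_of_nonneg (a := j * yuleMass m) (by positivity)]
    calc _ = |-(c * (j * yuleMass (m + 1)) + m / D * (j * yuleMass m))
            + ((if m = 1 then 1 else 0) - yuleMass (m + 1)) / D| := by congr 1; ring
      _ ≤ _ := by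
        refine (abs_add_le _ _).trans ?_
        rw [abs_neg, abs_of_nonneg hX]
        gcongr

lemma sum_abs_degreeError_succ_le {j : ℕ} (hjn : j < n) (K : ℕ) :
    ∑ k ∈ range K, |degreeError μ V (j + 1) (k + 1)|
      ≤ ∑ k ∈ range K, |degreeError μ V j (k + 1)| + 2 / (2 * j + 1) := by
  set D : ℝ := 2 * j + 1
  set f : ℕ → ℝ := fun k => k / D * |degreeError μ V j k|
  have htelescope : ∑ k ∈ range K,
      ((1 - (k + 1) / D) * |degreeError μ V j (k + 1)| + k / D * |degreeError μ V j k|)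
        = ∑ k ∈ range K, |degreeError μ V j (k + 1)| - f K := by
    have hsplit : ∀ k, (1 - (k + 1) / D) * |degreeError μ V j (k + 1)|
        + k / D * |degreeError μ V j k| = |degreeError μ V j (k + 1)| + (f k - f (k + 1)) :=
      fun k => by simp only [f]; push_cast; ring
    rw [sum_congr rfl fun k _ => hsplit k, sum_add_distrib, sum_range_sub']
    simp [f, sub_eq_add_neg]
  have hf : 0 ≤ f K := by simp only [f]; positivity
  have herror : ∑ k ∈ range K, ((if k = 1 then 1 else 0) + yuleMass (k + 1)) / D ≤ 2 / D := by
    rw [← sum_div, sum_add_distrib, sum_ite_eq' (range K) 1 fun _ => (1 : ℝ)]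
    gcongr
    have := sum_range_yuleMass_succ_le_one K
    split_ifs <;> linarith
  calc ∑ k ∈ range K, |degreeError μ V (j + 1) (k + 1)|
      ≤ ∑ k ∈ range K, (((1 - ((k : ℝ) + 1) / D) * |degreeError μ V j (k + 1)|
          + k / D * |degreeError μ V j k|)
          + ((if k = 1 then (1 : ℝ) else 0) + yuleMass (k + 1)) / D) :=
        sum_le_sum fun k _ => hV.abs_degreeError_succ_le hjn k
    _ ≤ ∑ k ∈ range K, |degreeError μ V j (k + 1)| + 2 / D := by
        rw [sum_add_distrib, htelescope]
        linarith

lemma sum_abs_degreeError_le {j : ℕ} (hjn : j ≤ n) (K : ℕ) :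
    ∑ k ∈ range K, |degreeError μ V j (k + 1)| ≤ 2 * (harmonic j : ℝ) := by
  induction j with
  | zero => simp [degreeError, degreeCount]
  | succ j ih =>
    calc _ ≤ ∑ k ∈ range K, |degreeError μ V j (k + 1)| + 2 / (2 * j + 1) :=
          hV.sum_abs_degreeError_succ_le hjn K
      _ ≤ 2 * (harmonic j : ℝ) + 2 / (j + 1) := by
          gcongr
          · exact ih (by omega)
          · linarith
      _ = 2 * (harmonic (j + 1) : ℝ) := by
          rw [harmonic_succ]
          push_cast
          ring

lemma abs_mixture_sub_yuleProb_le (hn : 0 < n) (B : Set ℕ) :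
    |1 / (n : ℝ) * ∑ i ∈ Icc 1 n, μ.real {ω | V i n ω ∈ B} - yuleProb B|
      ≤ 2 * (harmonic n : ℝ) / n := by
  have hn' : (0 : ℝ) < n := by exact_mod_cast hn
  rw [← Real.norm_eq_abs]
  refine norm_le_of_hasSum_of_sum_range_norm_le
    (((hV.hasSum_degreeCount B).mul_left (1 / (n : ℝ))).sub (hasSum_yuleProb B)) fun K => ?_
  calc ∑ k ∈ range K, ‖1 / (n : ℝ) * B.indicator (degreeCount μ V n) (k + 1)
          - B.indicator yuleMass (k + 1)‖
      ≤ ∑ k ∈ range K, |degreeError μ V n (k + 1)| / n := sum_le_sum fun k _ => by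
        by_cases hk : k + 1 ∈ B
        · have hrewrite : 1 / (n : ℝ) * degreeCount μ V n (k + 1) - yuleMass (k + 1)
              = degreeError μ V n (k + 1) / n := by
            rw [degreeError]
            field_simp
          rw [Set.indicator_of_mem hk, Set.indicator_of_mem hk, Real.norm_eq_abs, hrewrite,
            abs_div, abs_of_pos hn']
        · simp only [Set.indicator_of_notMem hk, mul_zero, sub_zero, norm_zero]
          positivity
    _ = (∑ k ∈ range K, |degreeError μ V n (k + 1)|) / n := (sum_div ..).symm
    _ ≤ 2 * (harmonic n : ℝ) / n := by
        gcongr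
        exact hV.sum_abs_degreeError_le le_rfl K

end IsPrefAttachDegrees

end PrefAttach

/-- The total degree of a uniformly chosen vertex in the preferential attachment graph
on `n` vertices is approximately Yule-Simon distributed; the law of `W_{n,I}` is the
mixture `(1/n) ∑_{i=1}^n L(W_{n,i})`. -/
theorem preferential_attachment_random_vertex_yule_simon :
    ∃ C : ℝ, ∀ (Ω : Type) (_ : MeasurableSpace Ω) (μ : Measure Ω)
      (_ : IsProbabilityMeasure μ) (n : ℕ), 2 ≤ n →
      ∀ V : ℕ → ℕ → Ω → ℕ, (∀ i j, Measurable (V i j)) →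
      -- `V i j` is the total degree `W_{j,i}` of vertex `i` at time `j`;
      -- initial step: `W_{i,i} = 1 + Bernoulli(1/(2i-1))`
      (∀ i : ℕ, 1 ≤ i → i ≤ n →
        (∀ ω, V i i ω = 1 ∨ V i i ω = 2) ∧
        (μ {ω | V i i ω = 2}).toReal = 1 / (2 * (i : ℝ) - 1)) →
      -- transition: conditional on `W_{j,i} = w`, vertex `j+1` attaches to `i`
      -- with probability `w/(2(j+1)-1)`
      (∀ i : ℕ, 1 ≤ i → ∀ j : ℕ, i ≤ j → j < n → ∀ w : ℕ,
        (μ {ω | V i (j + 1) ω = w + 1 ∧ V i j ω = w}).toReal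
            = (μ {ω | V i j ω = w}).toReal * w / (2 * ((j : ℝ) + 1) - 1) ∧
        (μ {ω | V i (j + 1) ω = w ∧ V i j ω = w}).toReal
            = (μ {ω | V i j ω = w}).toReal * (1 - w / (2 * ((j : ℝ) + 1) - 1))) →
      (⨆ B : Set ℕ,
        |(1 / (n : ℝ)) * ∑ i ∈ Finset.Icc 1 n, (μ {ω | V i n ω ∈ B}).toReal
          - yuleProb B|)
        ≤ C * Real.log n / n := by
  refine ⟨6, fun Ω _ μ _ n hn V hmeas hinit hstep => ?_⟩
  have hV : IsPrefAttachDegrees μ V n := ⟨hmeas, hinit, hstep⟩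
  have hlog : 1 / 2 < Real.log n :=
    calc (1 / 2 : ℝ) < Real.log 2 := by linarith [Real.log_two_gt_d9]
      _ ≤ Real.log n := Real.log_le_log two_pos (by exact_mod_cast hn)
  have hharmonic : 2 * (harmonic n : ℝ) ≤ 6 * Real.log n := by
    linarith [harmonic_le_one_add_log n]
  exact ciSup_le fun B => (hV.abs_mixture_sub_yuleProb_le (by omega) B).trans (by gcongr)
end
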